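/- arXiv:0910.3189 — 2 statements merged into one kernel-verified Lean document; each statement's English description precedes it below -/
import Mathlib

section
/- Let T be a complete L-theory and N ≥ 1. The following are equivalent: (1) there exist a model M of T, L-formulas φ₁(x̄,ȳ),…,φ_N(x̄,ȳ), and sequences (āⁱⱼ)_{j∈ℕ} of ȳ-tuples from M for 1 ≤ i ≤ N such that for every function η : {1,…,N} → ℕ the set of formulas {φᵢ(x̄,āⁱ_{η(i)}) : 1 ≤ i ≤ N} ∪ {¬φᵢ(x̄,āⁱⱼ) : 1 ≤ i ≤ N, j ≠ η(i)} is consistent (every finite subset is realized by an |x̄|-tuple of M); (2) there exist a model M of T, L-formulas ψ₁(x̄,ȳ),…,ψ_N(x̄,ȳ), and sequences (āⁱⱼ)_{j∈ℕ} for 1 ≤ i ≤ N that are mutually indiscernible (each sequence is indiscernible over the union of the ranges of all the others) such that the formula ⋀_{1≤i≤N} ψᵢ(x̄,āⁱ₀) ∧ ⋀_{1≤i≤N} ¬ψᵢ(x̄,āⁱ₁) is realized by an |x̄|-tuple of M. -/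
open FirstOrder Language Set

universe u v w

namespace DpMin

variable {L : FirstOrder.Language.{u, v}}

/-- Realization of a formula `φ(x, ȳ)` at an element `x` and a parameter tuple `ā`. -/
def Real1 {M : Type w} [L.Structure M] {m : ℕ}
    (φ : L.Formula (Fin 1 ⊕ Fin m)) (x : M) (a : Fin m → M) : Prop :=
  φ.Realize (Sum.elim (fun _ => x) a)

/-- An ICT pattern: for all `i j`, the set
`{φ(x,āᵢ), ψ(x,b̄ⱼ)} ∪ {¬φ(x,āₗ) : l ≠ i} ∪ {¬ψ(x,b̄ₖ) : k ≠ j}` is consistent, i.e. every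
finite subset of it is realized by some element of `M`. -/
def IsICTPattern {M : Type w} [L.Structure M] {m : ℕ}
    (φ ψ : L.Formula (Fin 1 ⊕ Fin m)) (a b : ℕ → Fin m → M) : Prop :=
  ∀ (i j : ℕ) (s : Finset ℕ), ∃ x : M,
    Real1 φ x (a i) ∧ Real1 ψ x (b j) ∧
    (∀ l ∈ s, l ≠ i → ¬ Real1 φ x (a l)) ∧
    (∀ k ∈ s, k ≠ j → ¬ Real1 ψ x (b k))

/-- A theory is dp-minimal if no model of it admits an ICT pattern. -/
def IsDpMinimal (T : L.Theory) : Prop :=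
  ∀ (M : Type w) [L.Structure M] [Nonempty M], M ⊨ T →
    ¬ ∃ (m : ℕ) (φ ψ : L.Formula (Fin 1 ⊕ Fin m)) (a b : ℕ → Fin m → M),
      IsICTPattern φ ψ a b

/-- The sequence of `m`-tuples `a`, restricted to indices in `S`, is indiscernible over the
parameter set `A`: increasing tuples of indices from `S` realize the same formulas with
parameters from `A`. -/
def IndiscernibleOn {M : Type w} [L.Structure M] {I : Type*} [LinearOrder I] {m : ℕ}
    (a : I → Fin m → M) (S : Set I) (A : Set M) : Prop :=
  ∀ (n k : ℕ) (φ : L.Formula ((Fin n × Fin m) ⊕ Fin k)) (c : Fin k → M),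
    (∀ t, c t ∈ A) →
    ∀ i j : Fin n → I, StrictMono i → StrictMono j →
      (∀ p, i p ∈ S) → (∀ p, j p ∈ S) →
      (φ.Realize (Sum.elim (fun p => a (i p.1) p.2) c) ↔
        φ.Realize (Sum.elim (fun p => a (j p.1) p.2) c))

/-- Indiscernibility of the whole sequence over a parameter set. -/
def IndiscernibleOver {M : Type w} [L.Structure M] {I : Type*} [LinearOrder I] {m : ℕ}
    (a : I → Fin m → M) (A : Set M) : Prop :=
  IndiscernibleOn (L := L) a Set.univ A

/-- Two sequences are mutually indiscernible if each is indiscernible over the union of the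
ranges of the other. -/
def MutuallyIndiscernible {M : Type w} [L.Structure M] {m : ℕ}
    (a b : ℕ → Fin m → M) : Prop :=
  IndiscernibleOver (L := L) a (⋃ j, Set.range (b j)) ∧
  IndiscernibleOver (L := L) b (⋃ i, Set.range (a i))

end DpMin

namespace DpMin

/-- An ICT pattern of depth `N` in `n` object variables: for every `η : Fin N → ℕ` the set
`{φₖ(x̄,āᵏ_{η k})} ∪ {¬φₖ(x̄,āᵏₜ) : t ≠ η k}` is consistent (every finite subset is realized). -/
def IsICTPatternDepth {L : FirstOrder.Language.{u, v}} {M : Type w} [L.Structure M]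
    (n : ℕ) {N m : ℕ}
    (φ : Fin N → L.Formula (Fin n ⊕ Fin m)) (a : Fin N → ℕ → Fin m → M) : Prop :=
  ∀ (η : Fin N → ℕ) (s : Finset (Fin N × ℕ)), ∃ x : Fin n → M,
    (∀ i : Fin N, (φ i).Realize (Sum.elim x (a i (η i)))) ∧
    ∀ p ∈ s, p.2 ≠ η p.1 → ¬ (φ p.1).Realize (Sum.elim x (a p.1 p.2))

/-- A family of sequences is mutually indiscernible if each sequence is indiscernible over the
union of the ranges of all the others. -/
def MutuallyIndiscernibleFamily {L : FirstOrder.Language.{u, v}} {M : Type w} [L.Structure M]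
    {N m : ℕ} (a : Fin N → ℕ → Fin m → M) : Prop :=
  ∀ i : Fin N, IndiscernibleOver (L := L) (a i)
    (⋃ (j : Fin N) (_ : j ≠ i) (k : ℕ), Set.range (a j k))

end DpMin

/-!
(1) ⇒ (2): an ICT pattern survives reindexing each sequence along an injection and passing to
ultraproducts. By Ramsey's theorem, every finite set of colourings of increasing tuples has a
common homogeneous subsequence; in the ultrapower over finite sets of colourings, replacing the
`i`-th sequence by these thinnings makes it indiscernible over the other sequences, and a sequence
that was already indiscernible over the others stays so, its thinnings being subsequences. Doing
this for each `i` in turn gives a mutually indiscernible pattern, and `η = 0` gives the witness.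

(2) ⇒ (1): say that `x` cuts a pair `(y, y')` if `ψᵢ(x, y) ∧ ¬ψᵢ(x, y')`, and let `θᵢ` express
this along the pairs `(aᵢ,₂ₜ, aᵢ,₂ₜ₊₁)`. By mutual indiscernibility some `x` cuts
`(aᵢ,₃η(i), aᵢ,₃η(i)+1)` for every `i`. In every other block `3t, 3t + 1, 3t + 2` one of the two
consecutive pairs is not cut by `x`, so along suitable increasing positions `x` cuts exactly the
`η(i)`-th pair of each sequence; mutual indiscernibility moves these positions back to `0, 1, 2, …`.
-/

namespace DpMin

def Homog {n : ℕ} (P : (Fin n → ℕ) → Prop) (g : ℕ → ℕ) : Prop :=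
  ∀ s t : Fin n → ℕ, StrictMono s → StrictMono t → (P (g ∘ s) ↔ P (g ∘ t))

theorem Homog.comp {n : ℕ} {P : (Fin n → ℕ) → Prop} {g h : ℕ → ℕ} (hg : Homog P g)
    (hh : StrictMono h) : Homog P (g ∘ h) :=
  fun s t hs ht => hg (h ∘ s) (h ∘ t) (hh.comp hs) (hh.comp ht)

theorem exists_homog_cons {n : ℕ}
    (ramsey : ∀ Q : (Fin n → ℕ) → Prop, ∃ g, StrictMono g ∧ Homog Q g)
    (P : (Fin (n + 1) → ℕ) → Prop) (f : ℕ → ℕ) :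
    ∃ e : ℕ → ℕ, StrictMono e ∧ 0 < e 0 ∧ Homog (fun s => P (Fin.cons (f 0) (f ∘ s))) e := by
  obtain ⟨h, hh, hhom⟩ := ramsey fun s => P (Fin.cons (f 0) (f ∘ Nat.succ ∘ s))
  exact ⟨Nat.succ ∘ h, strictMono_id.add_const 1 |>.comp hh, Nat.succ_pos _, hhom⟩

theorem exists_strictMono_homog :
    ∀ (n : ℕ) (P : (Fin n → ℕ) → Prop), ∃ g, StrictMono g ∧ Homog P g
  | 0, _ => ⟨id, strictMono_id, fun s t _ _ => by rw [Subsingleton.elim s t]⟩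
  | n + 1, P => by
    choose e he he0 hhom using exists_homog_cons (exists_strictMono_homog n) P
    -- `G k` is the `k`-th thinning of `ℕ`; its first term `G k 0` is the `k`-th chosen element.
    let G : ℕ → ℕ → ℕ := fun k => Nat.rec id (fun _ f => f ∘ e f) k
    have hG (k : ℕ) : StrictMono (G k) := by
      induction k with
      | zero => exact strictMono_id
      | succ k ih => exact ih.comp (he _)
    have hG_sub (j k : ℕ) (hjk : j ≤ k) (x : ℕ) : ∃ y, G k x = G j y := by
      induction k, hjk using Nat.le_induction generalizing x with
      | base => exact ⟨x, rfl⟩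
      | succ k _ ih => exact ih (e (G k) x)
    have ha : StrictMono fun k => G k 0 := strictMono_nat_of_lt_succ fun k => hG k (he0 (G k))
    -- The colour of a tuple of chosen elements depends only on its first entry `G k 0`.
    let v (k : ℕ) : Prop := P (Fin.cons (G k 0) (G (k + 1) ∘ Fin.val))
    have hv (c : Fin (n + 1) → ℕ) (hc : StrictMono c) : P ((fun k => G k 0) ∘ c) ↔ v (c 0) := by
      have hy (p : Fin n) : ∃ y, G (c p.succ) 0 = G (c 0 + 1) y :=
        hG_sub _ _ (hc (Fin.succ_pos p)) 0
      choose y hy using hy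
      have hy_mono : StrictMono y := fun p q hpq =>
        (hG (c 0 + 1)).lt_iff_lt.1 (by rw [← hy, ← hy]; exact ha (hc (Fin.succ_lt_succ_iff.2 hpq)))
      have hcons : (fun k => G k 0) ∘ c = Fin.cons (G (c 0) 0) (G (c 0 + 1) ∘ y) := by
        rw [← Fin.cons_self_tail ((fun k => G k 0) ∘ c)]
        congr 1
        funext p
        exact hy p
      rw [hcons]
      exact hhom (G (c 0)) y Fin.val hy_mono Fin.val_strictMono
    obtain ⟨φ, hφ⟩ := Nat.exists_subseq_of_forall_mem_union (s := {k | v k}) (t := {k | ¬ v k})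
      id fun k => em (v k)
    have hv_const (j j' : ℕ) : v (φ j) ↔ v (φ j') := by
      rcases hφ with h | h
      · exact iff_of_true (h j) (h j')
      · exact iff_of_false (h j) (h j')
    refine ⟨(fun k => G k 0) ∘ φ, ha.comp φ.strictMono, fun s t hs ht => ?_⟩
    rw [Function.comp_assoc, Function.comp_assoc, hv _ (φ.strictMono.comp hs),
      hv _ (φ.strictMono.comp ht)]
    exact hv_const _ _

def Coloring : Type := Σ n : ℕ, (Fin n → ℕ) → Prop

theorem exists_strictMono_forall_homog (F : Finset Coloring) :
    ∃ g, StrictMono g ∧ ∀ r ∈ F, Homog r.2 g := by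
  classical
  induction F using Finset.induction_on with
  | empty => exact ⟨id, strictMono_id, by simp⟩
  | insert r F _ ih =>
    obtain ⟨g, hg, hgF⟩ := ih
    obtain ⟨h, hh, hhom⟩ := exists_strictMono_homog r.1 fun s => r.2 (g ∘ s)
    exact ⟨g ∘ h, hg.comp hh, (Finset.forall_mem_insert ..).2
      ⟨hhom, fun r' hr' => (hgF r' hr').comp hh⟩⟩

theorem exists_ultrafilter_eventually_homog :
    ∃ (U : Ultrafilter (Finset Coloring)) (g : Finset Coloring → ℕ → ℕ),
      (∀ F, StrictMono (g F)) ∧ ∀ n (P : (Fin n → ℕ) → Prop), ∀ᶠ F in U, Homog P (g F) := by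
  choose g hg hhom using exists_strictMono_forall_homog
  refine ⟨Ultrafilter.of Filter.atTop, g, hg, fun n P => ?_⟩
  have hmem : ∀ᶠ F in (Filter.atTop : Filter (Finset Coloring)), ⟨n, P⟩ ∈ F :=
    Filter.eventually_atTop.2 ⟨{⟨n, P⟩}, fun F hF => hF (Finset.mem_singleton_self _)⟩
  exact (hmem.filter_mono (Ultrafilter.of_le _)).mono fun F hF => hhom F _ hF

variable {L : FirstOrder.Language.{u, v}}

section Basic

variable {M : Type*} [L.Structure M]

theorem IndiscernibleOver.mono {I : Type*} [LinearOrder I] {m : ℕ} {a : I → Fin m → M}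
    {A B : Set M} (h : IndiscernibleOver (L := L) a B) (hAB : A ⊆ B) :
    IndiscernibleOver (L := L) a A :=
  fun n k φ c hc => h n k φ c fun t => hAB (hc t)

theorem IndiscernibleOver.comp_strictMono {I J : Type*} [LinearOrder I] [LinearOrder J] {m : ℕ}
    {a : I → Fin m → M} {A : Set M} (h : IndiscernibleOver (L := L) a A) {σ : J → I}
    (hσ : StrictMono σ) : IndiscernibleOver (L := L) (a ∘ σ) A :=
  fun n k φ c hc i j hi hj _ _ =>
    h n k φ c hc (σ ∘ i) (σ ∘ j) (hσ.comp hi) (hσ.comp hj) (fun _ => trivial) fun _ => trivial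

theorem IsICTPatternDepth.comp_injective {n N m : ℕ} {φ : Fin N → L.Formula (Fin n ⊕ Fin m)}
    {a : Fin N → ℕ → Fin m → M} (h : IsICTPatternDepth n φ a) (σ : Fin N → ℕ → ℕ)
    (hσ : ∀ i, Function.Injective (σ i)) : IsICTPatternDepth n φ fun i k => a i (σ i k) := by
  classical
  intro η s
  obtain ⟨x, hη, hs⟩ := h (fun i => σ i (η i)) (s.image fun p => (p.1, σ p.1 p.2))
  exact ⟨x, hη, fun p hp hne => hs _ (Finset.mem_image_of_mem _ hp) fun he => hne (hσ p.1 he)⟩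

end Basic

section Ultraproduct

variable {α : Type*} {U : Ultrafilter α} {M : α → Type*} [∀ x, L.Structure (M x)]
  [∀ x, Nonempty (M x)]

theorem realize_sumElim_cast {β γ : Type*} (φ : L.Formula (β ⊕ γ)) (y : β → ∀ x, M x)
    (z : γ → ∀ x, M x) :
    φ.Realize (Sum.elim (fun b => (y b : (U : Filter α).Product M))
        fun c => (z c : (U : Filter α).Product M)) ↔
      ∀ᶠ x in U, φ.Realize (Sum.elim (fun b => y b x) fun c => z c x) := by
  have hcast : Sum.elim (fun b => (y b : (U : Filter α).Product M))
      (fun c => (z c : (U : Filter α).Product M)) =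
        fun d => ((Sum.elim y z d : ∀ x, M x) : (U : Filter α).Product M) := by
    funext d
    cases d <;> rfl
  rw [hcast, Ultraproduct.realize_formula_cast]
  refine Filter.eventually_congr (Filter.Eventually.of_forall fun x => ?_)
  rw [iff_iff_eq]
  congr 1
  funext d
  cases d <;> rfl

theorem model_ultraproduct {T : L.Theory} (h : ∀ x, M x ⊨ T) : (U : Filter α).Product M ⊨ T :=
  (Theory.model_iff T).2 fun σ hσ =>
    (Ultraproduct.sentence_realize σ).2
      (Filter.Eventually.of_forall fun x => (h x).realize_of_mem σ hσ)

theorem IsICTPatternDepth.ultraproduct {n N m : ℕ} {φ : Fin N → L.Formula (Fin n ⊕ Fin m)}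
    {a : ∀ x, Fin N → ℕ → Fin m → M x} (h : ∀ x, IsICTPatternDepth n φ (a x)) :
    IsICTPatternDepth n φ
      fun i k l => ((fun x => a x i k l : ∀ x, M x) : (U : Filter α).Product M) := by
  intro η s
  choose y hη hs using fun x => h x η s
  refine ⟨fun q => ((fun x => y x q : ∀ x, M x) : (U : Filter α).Product M), fun i => ?_,
    fun p hp hne => ?_⟩
  · exact (realize_sumElim_cast _ _ _).2 (Filter.Eventually.of_forall fun x => hη x i)
  · intro hp'
    obtain ⟨x, hx⟩ := ((realize_sumElim_cast _ _ _).1 hp').exists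
    exact hs x p hp hne hx

theorem IndiscernibleOver.ultraproduct {m : ℕ} {b : ∀ x, ℕ → Fin m → M x} {A : ∀ x, Set (M x)}
    (h : ∀ x, IndiscernibleOver (L := L) (b x) (A x)) :
    IndiscernibleOver (L := L)
      (fun k l => ((fun x => b x k l : ∀ x, M x) : (U : Filter α).Product M))
      ((fun d : ∀ x, M x => (d : (U : Filter α).Product M)) '' Set.univ.pi A) := by
  intro n k φ c hc i j hi hj _ _
  choose d hd hdc using hc
  obtain rfl : c = fun t => ((d t : ∀ x, M x) : (U : Filter α).Product M) :=
    funext fun t => (hdc t).symm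
  rw [realize_sumElim_cast, realize_sumElim_cast]
  exact Filter.eventually_congr (Filter.Eventually.of_forall fun x =>
    h x n k φ (fun t => d t x) (fun t => Set.mem_univ_pi.1 (hd t) x) i j hi hj
      (fun _ => trivial) fun _ => trivial)

end Ultraproduct

section Ultrapower

variable {α : Type*} {U : Ultrafilter α} {M : Type*} [L.Structure M] [Nonempty M]

theorem indiscernibleOver_ultrapower_of_eventually_homog {m : ℕ} (b : ℕ → Fin m → M)
    {g : α → ℕ → ℕ} (hg : ∀ n (P : (Fin n → ℕ) → Prop), ∀ᶠ x in U, Homog P (g x)) :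
    IndiscernibleOver (L := L)
      (fun k l => ((fun x => b (g x k) l : α → M) : (U : Filter α).Product fun _ => M))
      (Set.range fun y : M => ((fun _ => y : α → M) : (U : Filter α).Product fun _ => M)) := by
  intro n k φ c hc i j hi hj _ _
  choose d hd using hc
  obtain rfl := funext hd
  rw [realize_sumElim_cast, realize_sumElim_cast]
  exact Filter.eventually_congr ((hg n fun s => φ.Realize
    (Sum.elim (fun p => b (s p.1) p.2) d)).mono fun x hx => hx i j hi hj)

end Ultrapower

def IndiscernibleOverOthers {M : Type*} [L.Structure M] {N m : ℕ} (a : Fin N → ℕ → Fin m → M)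
    (i : Fin N) : Prop :=
  IndiscernibleOver (L := L) (a i) (⋃ (j : Fin N) (_ : j ≠ i) (k : ℕ), Set.range (a j k))

section Extraction

variable {T : L.Theory} {n N m : ℕ} {φ : Fin N → L.Formula (Fin n ⊕ Fin m)}

theorem exists_ultrapower_indiscernibleOverOthers (M : Theory.ModelType.{u, v, w} T)
    {a : Fin N → ℕ → Fin m → M} (ha : IsICTPatternDepth n φ a) (i : Fin N) :
    ∃ (M' : Theory.ModelType.{u, v, w} T) (a' : Fin N → ℕ → Fin m → M'),
      IsICTPatternDepth n φ a' ∧ IndiscernibleOverOthers (L := L) a' i ∧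
        ∀ j, IndiscernibleOverOthers (L := L) a j → IndiscernibleOverOthers (L := L) a' j := by
  obtain ⟨U, g, hg, hhom⟩ := exists_ultrafilter_eventually_homog
  let σ (F : Finset Coloring) : Fin N → ℕ → ℕ := Function.update (fun _ => id) i (g F)
  have hσ (F : Finset Coloring) (j : Fin N) : StrictMono (σ F j) := by
    rcases eq_or_ne j i with rfl | hj
    · simpa [σ] using hg F
    · simpa [σ, hj] using strictMono_id
  have := model_ultraproduct (U := U) fun _ => M.is_model
  let a' (j : Fin N) (k : ℕ) (l : Fin m) : (U : Filter (Finset Coloring)).Product fun _ => M :=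
    ((fun F => a j (σ F j k) l : Finset Coloring → M) :
      (U : Filter (Finset Coloring)).Product fun _ => M)
  refine ⟨.of T ((U : Filter (Finset Coloring)).Product fun _ => M), a',
    IsICTPatternDepth.ultraproduct fun F => ha.comp_injective (σ F) fun j => (hσ F j).injective,
    ?_, fun j hj => ?_⟩
  · change IndiscernibleOverOthers (M := (U : Filter (Finset Coloring)).Product fun _ => M) a' i
    have ha'_i : a' i = fun k l =>
        ((fun F => a i (g F k) l : Finset Coloring → M) :
          (U : Filter (Finset Coloring)).Product fun _ => M) := by
      funext k l
      simp only [a', σ, Function.update_self]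
      rfl
    refine (ha'_i ▸ indiscernibleOver_ultrapower_of_eventually_homog (a i) hhom).mono <|
      Set.iUnion₂_subset fun j hj => Set.iUnion_subset fun k =>
        Set.range_subset_iff.2 fun l => ?_
    exact ⟨a j k l, by simp [a', σ, hj]⟩
  · change IndiscernibleOverOthers (M := (U : Filter (Finset Coloring)).Product fun _ => M) a' j
    refine (IndiscernibleOver.ultraproduct (A := fun _ => _)
      fun F => hj.comp_strictMono (hσ F j)).mono <|
      Set.iUnion₂_subset fun j' hj' => Set.iUnion_subset fun k =>
        Set.range_subset_iff.2 fun l => ?_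
    exact ⟨_, Set.mem_univ_pi.2 fun F =>
      Set.mem_iUnion₂.2 ⟨j', hj', Set.mem_iUnion.2 ⟨_, Set.mem_range_self l⟩⟩, rfl⟩

theorem exists_model_isICTPatternDepth_mutuallyIndiscernible (M : Theory.ModelType.{u, v, w} T)
    {a : Fin N → ℕ → Fin m → M} (ha : IsICTPatternDepth n φ a) :
    ∃ (M' : Theory.ModelType.{u, v, w} T) (a' : Fin N → ℕ → Fin m → M'),
      IsICTPatternDepth n φ a' ∧ MutuallyIndiscernibleFamily (L := L) a' := by
  classical
  suffices h : ∀ S : Finset (Fin N), ∃ (M' : Theory.ModelType.{u, v, w} T)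
      (a' : Fin N → ℕ → Fin m → M'),
      IsICTPatternDepth n φ a' ∧ ∀ j ∈ S, IndiscernibleOverOthers (L := L) a' j by
    obtain ⟨M', a', ha', hS⟩ := h Finset.univ
    exact ⟨M', a', ha', fun j => hS j (Finset.mem_univ j)⟩
  intro S
  induction S using Finset.induction_on with
  | empty => exact ⟨M, a, ha, by simp⟩
  | insert i S _ ih =>
    obtain ⟨M', a', ha', hS⟩ := ih
    obtain ⟨M'', a'', ha'', hi, hpres⟩ := exists_ultrapower_indiscernibleOverOthers M' ha' i
    exact ⟨M'', a'', ha'', (Finset.forall_mem_insert ..).2 ⟨hi, fun j hj => hpres j (hS j hj)⟩⟩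

end Extraction

section Mutual

variable {M : Type*} [L.Structure M]

theorem IndiscernibleOver.realize_iff {I : Type*} [LinearOrder I] {m : ℕ} {a : I → Fin m → M}
    {A : Set M} (h : IndiscernibleOver (L := L) a A) {ι : Type*} [Finite ι] {n : ℕ}
    (φ : L.Formula ((Fin n × Fin m) ⊕ ι)) {c : ι → M} (hc : ∀ t, c t ∈ A) {i j : Fin n → I}
    (hi : StrictMono i) (hj : StrictMono j) :
    φ.Realize (Sum.elim (fun p => a (i p.1) p.2) c) ↔
      φ.Realize (Sum.elim (fun p => a (j p.1) p.2) c) := by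
  let e := Finite.equivFin ι
  have := h n _ (φ.relabel (Sum.map id e)) (c ∘ e.symm) (fun t => hc _) i j hi hj
    (fun _ => trivial) fun _ => trivial
  simpa [Formula.realize_relabel, Sum.elim_comp_map, Function.comp_assoc] using this

variable {N K m : ℕ}

def entriesAt (a : Fin N → ℕ → Fin m → M) (u : Fin N → Fin K → ℕ) :
    Fin N × Fin K × Fin m → M :=
  fun q => a q.1 (u q.1 q.2.1) q.2.2

theorem IndiscernibleOverOthers.realize_entriesAt_iff {a : Fin N → ℕ → Fin m → M} {i : Fin N}
    (h : IndiscernibleOverOthers (L := L) a i) (Θ : L.Formula (Fin N × Fin K × Fin m))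
    {u u' : Fin N → Fin K → ℕ} (hu : StrictMono (u i)) (hu' : StrictMono (u' i))
    (huu' : ∀ j ≠ i, u j = u' j) :
    Θ.Realize (entriesAt a u) ↔ Θ.Realize (entriesAt a u') := by
  classical
  -- The entries of the other sequences become parameters.
  let g (q : Fin N × Fin K × Fin m) : (Fin K × Fin m) ⊕ {q : Fin N × Fin K × Fin m // q.1 ≠ i} :=
    if hq : q.1 = i then .inl q.2 else .inr ⟨q, hq⟩
  let c (q : {q : Fin N × Fin K × Fin m // q.1 ≠ i}) : M := entriesAt a u q.1
  have hc (q : {q : Fin N × Fin K × Fin m // q.1 ≠ i}) :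
      c q ∈ ⋃ (j : Fin N) (_ : j ≠ i) (k : ℕ), Set.range (a j k) :=
    Set.mem_iUnion₂.2 ⟨q.1.1, q.2, Set.mem_iUnion.2 ⟨_, Set.mem_range_self _⟩⟩
  have hrelabel (w : Fin N → Fin K → ℕ) (hw : ∀ j ≠ i, w j = u j) :
      (Θ.relabel g).Realize (Sum.elim (fun p => a i (w i p.1) p.2) c) ↔
        Θ.Realize (entriesAt a w) := by
    rw [Formula.realize_relabel, iff_iff_eq]
    congr 1
    funext ⟨j, k, l⟩
    by_cases hj : j = i
    · subst hj
      simp [g, entriesAt]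
    · simp [g, c, hj, entriesAt, hw j hj]
  rw [← hrelabel u fun _ _ => rfl, ← hrelabel u' fun j hj => (huu' j hj).symm]
  exact h.realize_iff _ hc hu hu'

theorem MutuallyIndiscernibleFamily.realize_entriesAt_iff {a : Fin N → ℕ → Fin m → M}
    (h : MutuallyIndiscernibleFamily (L := L) a) (Θ : L.Formula (Fin N × Fin K × Fin m))
    {u u' : Fin N → Fin K → ℕ} (hu : ∀ i, StrictMono (u i)) (hu' : ∀ i, StrictMono (u' i)) :
    Θ.Realize (entriesAt a u) ↔ Θ.Realize (entriesAt a u') := by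
  classical
  -- Change the positions one sequence at a time.
  suffices key : ∀ S : Finset (Fin N), ∀ u : Fin N → Fin K → ℕ, (∀ i, StrictMono (u i)) →
      (∀ j ∉ S, u j = u' j) → (Θ.Realize (entriesAt a u) ↔ Θ.Realize (entriesAt a u')) from
    key Finset.univ u hu fun j hj => absurd (Finset.mem_univ j) hj
  intro S
  induction S using Finset.induction_on with
  | empty =>
    intro u _ huu'
    rw [funext fun j => huu' j (Finset.notMem_empty j)]
  | insert i S _ ih =>
    intro u hu huu'
    let w := Function.update u i (u' i)
    have hw (j : Fin N) : StrictMono (w j) := by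
      rcases eq_or_ne j i with rfl | hj
      · simpa [w] using hu' j
      · simpa [w, hj] using hu j
    calc Θ.Realize (entriesAt a u) ↔ Θ.Realize (entriesAt a w) :=
          IndiscernibleOverOthers.realize_entriesAt_iff (h i) Θ (hu i) (hw i) fun j hj => by
            simp [w, hj]
      _ ↔ Θ.Realize (entriesAt a u') := ih w hw fun j hj => by
          rcases eq_or_ne j i with rfl | hji
          · simp [w]
          · simpa [w, hji] using huu' j (by simp [hji, hj])

theorem MutuallyIndiscernibleFamily.exists_profile_iff {a : Fin N → ℕ → Fin m → M}
    (h : MutuallyIndiscernibleFamily (L := L) a) {n : ℕ} (ψ : Fin N → L.Formula (Fin n ⊕ Fin m))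
    (B : ℕ) (Q : (Fin N → ℕ → Prop) → Prop)
    (hQ : ∀ p p' : Fin N → ℕ → Prop, (∀ i, ∀ k < B, (p i k ↔ p' i k)) → (Q p ↔ Q p'))
    {u u' : Fin N → ℕ → ℕ} (hu : ∀ i, StrictMono (u i)) (hu' : ∀ i, StrictMono (u' i)) :
    (∃ x : Fin n → M, Q fun i k => (ψ i).Realize (Sum.elim x (a i (u i k)))) ↔
      ∃ x : Fin n → M, Q fun i k => (ψ i).Realize (Sum.elim x (a i (u' i k))) := by
  classical
  let atom (i : Fin N) (k : Fin B) : L.Formula ((Fin N × Fin B × Fin m) ⊕ Fin n) :=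
    (ψ i).relabel (Sum.elim Sum.inr fun l => Sum.inl (i, k, l))
  let extend (p : Fin N → Fin B → Bool) (i : Fin N) (k : ℕ) : Prop := ∃ hk : k < B, p i ⟨k, hk⟩
  -- `Q`, which only sees the first `B` positions, is a finite disjunction of truth tables.
  let Θ : L.Formula (Fin N × Fin B × Fin m) := Formula.iExs (Fin n) <|
    Formula.iSup fun p : {p : Fin N → Fin B → Bool // Q (extend p)} =>
      Formula.iInf fun ik : Fin N × Fin B =>
        if p.1 ik.1 ik.2 then atom ik.1 ik.2 else (atom ik.1 ik.2).not
  have hΘ (w : Fin N → ℕ → ℕ) : Θ.Realize (entriesAt a fun i k => w i k) ↔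
      ∃ x : Fin n → M, Q fun i k => (ψ i).Realize (Sum.elim x (a i (w i k))) := by
    have hlit (x : Fin n → M) (ik : Fin N × Fin B) (b : Bool) :
        (if b then atom ik.1 ik.2 else (atom ik.1 ik.2).not).Realize
            (Sum.elim (entriesAt a fun i k => w i k) x) ↔
          ((ψ ik.1).Realize (Sum.elim x (a ik.1 (w ik.1 ik.2))) ↔ b = true) := by
      have : (atom ik.1 ik.2).Realize (Sum.elim (entriesAt a fun i k => w i k) x) ↔
          (ψ ik.1).Realize (Sum.elim x (a ik.1 (w ik.1 ik.2))) := by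
        rw [Formula.realize_relabel, iff_iff_eq]
        congr 1
        funext z
        cases z <;> rfl
      cases b <;> simp [this]
    simp only [Θ, Formula.realize_iExs, Formula.realize_iSup, Formula.realize_iInf, hlit]
    refine exists_congr fun x => ⟨fun ⟨p, hp⟩ => (hQ _ _ fun i k hk => ?_).1 p.2, fun hx =>
      ⟨⟨fun i k => decide ((ψ i).Realize (Sum.elim x (a i (w i k)))),
        (hQ _ _ fun i k hk => ?_).2 hx⟩, fun ik => by simp⟩⟩
    · exact ⟨fun ⟨_, hp'⟩ => (hp (i, ⟨k, hk⟩)).2 hp', fun hψ => ⟨hk, (hp (i, ⟨k, hk⟩)).1 hψ⟩⟩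
    · simp [extend, hk]
  rw [← hΘ u, ← hΘ u']
  exact h.realize_entriesAt_iff Θ (fun i => (hu i).comp Fin.val_strictMono)
    fun i => (hu' i).comp Fin.val_strictMono

end Mutual

section Pairs

def pairFormula {n m : ℕ} (ψ : L.Formula (Fin n ⊕ Fin m)) : L.Formula (Fin n ⊕ Fin (m + m)) :=
  ψ.relabel (Sum.map id (Fin.castAdd m)) ⊓ (ψ.relabel (Sum.map id (Fin.natAdd m))).not

theorem realize_pairFormula {M : Type*} [L.Structure M] {n m : ℕ} (ψ : L.Formula (Fin n ⊕ Fin m))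
    (x : Fin n → M) (y y' : Fin m → M) :
    (pairFormula ψ).Realize (Sum.elim x (Fin.append y y')) ↔
      ψ.Realize (Sum.elim x y) ∧ ¬ ψ.Realize (Sum.elim x y') := by
  have hy : Fin.append y y' ∘ Fin.castAdd m = y := funext (Fin.append_left y y')
  have hy' : Fin.append y y' ∘ Fin.natAdd m = y' := funext (Fin.append_right y y')
  simp [pairFormula, Formula.realize_relabel, Sum.elim_comp_map, hy, hy']

theorem exists_uncut_shift (P : ℕ → Prop) (t₀ : ℕ) :
    ∃ d : ℕ → ℕ, (∀ t, d t ≤ 1) ∧ d t₀ = 0 ∧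
      ∀ t ≠ t₀, ¬ (P (3 * t + d t) ∧ ¬ P (3 * t + d t + 1)) := by
  classical
  refine ⟨fun t => if t = t₀ ∨ ¬ (P (3 * t) ∧ ¬ P (3 * t + 1)) then 0 else 1,
    fun t => by dsimp only; split <;> omega, by simp, fun t ht => ?_⟩
  by_cases hcut : P (3 * t) ∧ ¬ P (3 * t + 1) <;> simp [ht, hcut]

def spread (d : ℕ → ℕ) (q : ℕ) : ℕ := 3 * (q / 2) + d (q / 2) + q % 2

theorem spread_two_mul (d : ℕ → ℕ) (t : ℕ) : spread d (2 * t) = 3 * t + d t := by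
  simp [spread]

theorem spread_two_mul_add_one (d : ℕ → ℕ) (t : ℕ) :
    spread d (2 * t + 1) = 3 * t + d t + 1 := by
  simp [spread, Nat.add_div, Nat.add_mod]

theorem strictMono_spread {d : ℕ → ℕ} (hd : ∀ t, d t ≤ 1) : StrictMono (spread d) := by
  refine strictMono_nat_of_lt_succ fun q => ?_
  obtain ⟨t, rfl | rfl⟩ := Nat.even_or_odd' q
  · rw [spread_two_mul, spread_two_mul_add_one]
    omega
  · rw [spread_two_mul_add_one, show 2 * t + 1 + 1 = 2 * (t + 1) by ring, spread_two_mul]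
    have := hd t
    omega

end Pairs

theorem MutuallyIndiscernibleFamily.isICTPatternDepth_pairFormula {M : Type*} [L.Structure M]
    {N n m : ℕ} {a : Fin N → ℕ → Fin m → M} (h : MutuallyIndiscernibleFamily (L := L) a)
    (ψ : Fin N → L.Formula (Fin n ⊕ Fin m)) {x₀ : Fin n → M}
    (hx₀ : ∀ i, (ψ i).Realize (Sum.elim x₀ (a i 0)) ∧ ¬ (ψ i).Realize (Sum.elim x₀ (a i 1))) :
    IsICTPatternDepth n (fun i => pairFormula (ψ i))
      fun i t => Fin.append (a i (2 * t)) (a i (2 * t + 1)) := by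
  intro η s
  obtain ⟨B, hηB, hsB⟩ : ∃ B, (∀ i, η i < B) ∧ ∀ p ∈ s, p.2 < B := by
    obtain ⟨B, hB⟩ := ((Set.finite_range η).union (s.finite_toSet.image Prod.snd)).bddAbove
    exact ⟨B + 1, fun i => Nat.lt_succ_of_le (hB (.inl ⟨i, rfl⟩)),
      fun p hp => Nat.lt_succ_of_le (hB (.inr ⟨p, hp, rfl⟩))⟩
  obtain ⟨x', hx'⟩ := (h.exists_profile_iff ψ 2 (fun p => ∀ i, p i 0 ∧ ¬ p i 1)
    (fun p p' hpp' => forall_congr' fun i =>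
      and_congr (hpp' i 0 (by omega)) (not_congr (hpp' i 1 (by omega))))
    (u := fun _ k => k) (u' := fun i k => 3 * η i + k) (fun _ => strictMono_id)
    (fun i => strictMono_id.const_add _)).1 ⟨x₀, hx₀⟩
  choose d hd1 hdη hd using fun i =>
    exists_uncut_shift (fun k => (ψ i).Realize (Sum.elim x' (a i k))) (η i)
  let cutExactlyAtη (p : Fin N → ℕ → Prop) : Prop :=
    ∀ i, ∀ t < B, (t = η i ↔ p i (2 * t) ∧ ¬ p i (2 * t + 1))
  have hx'_cut : cutExactlyAtη fun i k => (ψ i).Realize (Sum.elim x' (a i (spread (d i) k))) := by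
    intro i t _
    simp only [spread_two_mul, spread_two_mul_add_one]
    rcases eq_or_ne t (η i) with rfl | ht
    · simpa [hdη] using hx' i
    · exact iff_of_false ht (hd i t ht)
  obtain ⟨x, hx⟩ := (h.exists_profile_iff ψ (2 * B) cutExactlyAtη
    (fun p p' hpp' => forall_congr' fun i => forall₂_congr fun t ht => iff_congr Iff.rfl
      (and_congr (hpp' i _ (by omega)) (not_congr (hpp' i _ (by omega)))))
    (u := fun i => spread (d i)) (u' := fun _ k => k) (fun i => strictMono_spread (hd1 i))
    (fun _ => strictMono_id)).1 ⟨x', hx'_cut⟩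
  refine ⟨x, fun i => ?_, fun p hp hne => ?_⟩
  · exact (realize_pairFormula _ _ _ _).2 ((hx i (η i) (hηB i)).1 rfl)
  · exact fun hcut => hne ((hx p.1 p.2 (hsB p hp)).2 ((realize_pairFormula _ _ _ _).1 hcut))

theorem ict_depth_iff_mutually_indiscernible_general {L : FirstOrder.Language.{u, v}}
    (T : L.Theory) (N : ℕ) :
    (∃ (M : FirstOrder.Language.Theory.ModelType.{u, v, w} T) (n m : ℕ) (φ : Fin N → L.Formula (Fin n ⊕ Fin m))
        (a : Fin N → ℕ → Fin m → M), IsICTPatternDepth (L := L) n φ a) ↔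
    (∃ (M : FirstOrder.Language.Theory.ModelType.{u, v, w} T) (n m : ℕ) (ψ : Fin N → L.Formula (Fin n ⊕ Fin m))
        (a : Fin N → ℕ → Fin m → M), MutuallyIndiscernibleFamily (L := L) a ∧
        ∃ x : Fin n → M, ∀ i : Fin N,
          (ψ i).Realize (Sum.elim x (a i 0)) ∧ ¬ (ψ i).Realize (Sum.elim x (a i 1))) := by
  constructor
  · rintro ⟨M, n, m, φ, a, ha⟩
    obtain ⟨M', a', ha', hmi⟩ := exists_model_isICTPatternDepth_mutuallyIndiscernible M ha
    obtain ⟨x, hx0, hx1⟩ := ha' 0 (Finset.univ.image fun i => (i, 1))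
    exact ⟨M', n, m, φ, a', hmi, x, fun i => ⟨hx0 i, hx1 (i, 1) (by simp) one_ne_zero⟩⟩
  · rintro ⟨M, n, m, ψ, a, hmi, x, hx⟩
    exact ⟨M, n, m + m, _, _, hmi.isICTPatternDepth_pairFormula ψ hx⟩

/-- Depth-`N` ICT patterns exist in some model of `T` iff they exist with mutually indiscernible
witnessing sequences, where only the first two instances of each formula need be decided. -/
theorem ict_depth_iff_mutually_indiscernible {L : FirstOrder.Language.{u, v}}
    (T : L.Theory) (hT : T.IsComplete) (N : ℕ) (hN : 1 ≤ N) :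
    (∃ (M : FirstOrder.Language.Theory.ModelType.{u, v, w} T) (n m : ℕ) (φ : Fin N → L.Formula (Fin n ⊕ Fin m))
        (a : Fin N → ℕ → Fin m → M), IsICTPatternDepth (L := L) n φ a) ↔
    (∃ (M : FirstOrder.Language.Theory.ModelType.{u, v, w} T) (n m : ℕ) (ψ : Fin N → L.Formula (Fin n ⊕ Fin m))
        (a : Fin N → ℕ → Fin m → M), MutuallyIndiscernibleFamily (L := L) a ∧
        ∃ x : Fin n → M, ∀ i : Fin N,
          (ψ i).Realize (Sum.elim x (a i 0)) ∧ ¬ (ψ i).Realize (Sum.elim x (a i 1))) :=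
  ict_depth_iff_mutually_indiscernible_general T N

end DpMin
end

section
/- Every o-minimal complete theory is dp-minimal: if L is a language containing a binary relation symbol <, and T is a complete L-theory such that in every model M of T the symbol < is interpreted as a dense linear order and every subset of M definable with parameters by an L-formula in one free variable is a finite union of singletons and open intervals (a,b) with endpoints a,b ∈ M ∪ {−∞,+∞}, then no model of T admits an ICT pattern. -/
/-
In an o-minimal theory, an instance `φ(x, ā)` of a formula cannot alternate arbitrarily often
along an increasing chain: a union of `N` points and intervals alternates at most `N` times, and
an ultrapower (compactness) makes this bound uniform in `ā`. An ICT pattern, on the other hand,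
yields an `R × R` grid of points whose row `i` lies in `φ(x, āᵢ)` alone and whose column `j` lies
in `ψ(x, b̄ⱼ)` alone. Listing the grid in increasing order, any two consecutive points are
separated by a row or a column, so the `R² - 1` gaps force some row or column to alternate about
`R / 2` times, which is unbounded in `R`.
-/

open FirstOrder Language Set

universe u v w

namespace DpMin

/-- A set is an open interval with endpoints in `M ∪ {−∞, +∞}` with respect to the relation `r`
(thought of as `<`). -/
def IsOpenIntervalRel {M : Type w} (r : M → M → Prop) (Y : Set M) : Prop :=
  (∃ a b : M, Y = {x : M | r a x ∧ r x b}) ∨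
  (∃ a : M, Y = {x : M | r a x}) ∨
  (∃ b : M, Y = {x : M | r x b}) ∨
  Y = Set.univ

variable {L : FirstOrder.Language.{u, v}}

open Structure
open scoped Finset

section Alternation

variable {α β : Type*}

/-- `x₀ r y₀ r x₁ r y₁ ⋯ r y_{k-1}` with all `xₜ ∈ S` and all `yₜ ∉ S`; only the first `k` terms
of `x` and `y` matter. -/
def Alternates (r : α → α → Prop) (S : Set α) (k : ℕ) : Prop :=
  ∃ x y : ℕ → α, ∀ t < k,
    x t ∈ S ∧ y t ∉ S ∧ r (x t) (y t) ∧ ∀ t' < k, t < t' → r (y t) (x t')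

theorem Alternates.mono {r : α → α → Prop} {S : Set α} {k k' : ℕ} (h : Alternates r S k)
    (hk : k' ≤ k) : Alternates r S k' := by
  obtain ⟨x, y, hxy⟩ := h
  refine ⟨x, y, fun t ht => ?_⟩
  obtain ⟨hx, hy, hxy, hyx⟩ := hxy t (ht.trans_le hk)
  exact ⟨hx, hy, hxy, fun t' ht' => hyx t' (ht'.trans_le hk)⟩

theorem Alternates.map {r : α → α → Prop} {s : β → β → Prop} {f : α → β} {S : Set β} {k : ℕ}
    (hf : ∀ ⦃a b⦄, r a b → s (f a) (f b)) (h : Alternates r (f ⁻¹' S) k) :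
    Alternates s S k := by
  obtain ⟨x, y, hxy⟩ := h
  refine ⟨f ∘ x, f ∘ y, fun t ht => ?_⟩
  obtain ⟨hx, hy, hxy, hyx⟩ := hxy t ht
  exact ⟨hx, hy, hf hxy, fun t' ht' htt' => hf (hyx t' ht' htt')⟩

end Alternation

section OMinimal

variable {α : Type w} {r : α → α → Prop}

def IsFiniteUnionOfIntervals (r : α → α → Prop) (X : Set α) : Prop :=
  ∃ (N : ℕ) (C : Fin N → Set α),
    (∀ i, (∃ p : α, C i = {p}) ∨ IsOpenIntervalRel r (C i)) ∧ X = ⋃ i, C i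

theorem mem_of_between [IsStrictOrder α r] {C : Set α}
    (hC : (∃ p : α, C = {p}) ∨ IsOpenIntervalRel r C) {u z v : α} (hu : u ∈ C) (hv : v ∈ C)
    (huz : r u z) (hzv : r z v) : z ∈ C := by
  rcases hC with ⟨p, rfl⟩ | ⟨p, q, rfl⟩ | ⟨p, rfl⟩ | ⟨q, rfl⟩ | rfl
  · rw [mem_singleton_iff] at hu hv
    subst hu hv
    exact absurd (_root_.trans huz hzv) (irrefl _)
  · exact ⟨_root_.trans hu.1 huz, _root_.trans hzv hv.2⟩
  · exact _root_.trans (show r p u from hu) huz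
  · exact _root_.trans hzv (show r v q from hv)
  · trivial

/-- Two of `x₀, …, x_N` lie in the same piece, and a `yₜ` between them is then in it too. -/
theorem IsFiniteUnionOfIntervals.exists_not_alternates [IsStrictOrder α r] {X : Set α}
    (hX : IsFiniteUnionOfIntervals r X) : ∃ k, ¬ Alternates r X k := by
  obtain ⟨N, C, hC, rfl⟩ := hX
  refine ⟨N + 1, fun ⟨x, y, hxy⟩ => ?_⟩
  have hpiece : ∀ t : Fin (N + 1), ∃ i, x t ∈ C i := fun t => mem_iUnion.1 (hxy t t.2).1
  choose g hg using hpiece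
  obtain ⟨t₁, t₂, hne, heq⟩ := Fintype.exists_ne_map_eq_of_card_lt g (by simp)
  wlog hlt : t₁ < t₂ generalizing t₁ t₂
  · exact this t₂ t₁ hne.symm heq.symm (hne.lt_or_gt.resolve_left hlt)
  obtain ⟨-, hy, hxy₁, hyx⟩ := hxy t₁ t₁.2
  exact hy (mem_iUnion.2 ⟨g t₁,
    mem_of_between (hC _) (hg t₁) (heq ▸ hg t₂) hxy₁ (hyx t₂ t₂.2 hlt)⟩)

end OMinimal

section Ultrapower

variable {M : Type w} [L.Structure M] [Nonempty M] (U : Ultrafilter ℕ)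

abbrev Ultrapower (U : Ultrafilter ℕ) (M : Type w) : Type w :=
  (U : Filter ℕ).Product fun _ : ℕ => M

theorem ultrapower_model {T : L.Theory} (hM : M ⊨ T) : Ultrapower U M ⊨ T :=
  (Theory.model_iff _).2 fun _ hσ =>
    (Ultraproduct.sentence_realize _).2 (.of_forall fun _ => T.realize_sentence_of_mem hσ)

theorem real1_ultrapower_iff {m : ℕ} (φ : L.Formula (Fin 1 ⊕ Fin m)) (f : ℕ → M)
    (a : Fin m → ℕ → M) :
    Real1 φ (f : Ultrapower U M) (fun t => (a t : Ultrapower U M)) ↔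
      ∀ᶠ n in (U : Filter ℕ), Real1 φ (f n) (fun t => a t n) := by
  have h := Ultraproduct.realize_formula_cast (u := U) φ (Sum.elim (fun _ => f) a)
  refine (Iff.of_eq (congrArg φ.Realize ?_)).trans (h.trans (Filter.eventually_congr
    (.of_forall fun n => Iff.of_eq (congrArg φ.Realize ?_)))) <;> funext i <;> cases i <;> rfl

theorem relMap_ultrapower_iff (lt : L.Relations 2) (f g : ℕ → M) :
    RelMap lt ![(f : Ultrapower U M), (g : Ultrapower U M)] ↔
      ∀ᶠ n in (U : Filter ℕ), RelMap lt ![f n, g n] := by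
  have h := Ultraproduct.realize_formula_cast (u := U)
    (lt.formula₂ (Term.var 0) (Term.var 1) : L.Formula (Fin 2)) ![f, g]
  simp only [Formula.realize_rel₂, Term.realize_var] at h
  refine (Iff.of_eq (congrArg (RelMap lt) ?_)).trans h
  funext i
  fin_cases i <;> rfl

/-- Were the bound to fail, the `n`-th parameter would carry an alternation of length `n`; in a
nonprincipal ultrapower these glue into an infinite alternation of a single definable set. -/
theorem exists_alternation_bound (lt : L.Relations 2) {T : L.Theory}
    (horder : ∀ (N : Type w) [L.Structure N] [Nonempty N], N ⊨ T →
      IsStrictOrder N (fun x y : N => RelMap lt ![x, y]))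
    (hint : ∀ (N : Type w) [L.Structure N] [Nonempty N], N ⊨ T →
      ∀ (m : ℕ) (φ : L.Formula (Fin 1 ⊕ Fin m)) (a : Fin m → N),
        IsFiniteUnionOfIntervals (fun x y : N => RelMap lt ![x, y]) {x | Real1 φ x a})
    (hM : M ⊨ T) {m : ℕ} (φ : L.Formula (Fin 1 ⊕ Fin m)) (a : ℕ → Fin m → M) :
    ∃ k, ∀ i, ¬ Alternates (fun x y : M => RelMap lt ![x, y]) {x | Real1 φ x (a i)} k := by
  by_contra! h
  choose i hi using h
  choose x y hxy using hi
  let U := Ultrafilter.of (Filter.atTop : Filter ℕ)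
  have hN := ultrapower_model U hM
  have := horder _ hN
  obtain ⟨k, hk⟩ := (hint _ hN m φ fun s => ((fun n => a (i n) s : ℕ → M) : Ultrapower U M))
    |>.exists_not_alternates
  have hlarge : ∀ᶠ n in (U : Filter ℕ), k < n :=
    Ultrafilter.of_le _ (Filter.eventually_gt_atTop k)
  refine hk ⟨fun t => ((fun n => x n t : ℕ → M) : Ultrapower U M),
    fun t => ((fun n => y n t : ℕ → M) : Ultrapower U M), fun t ht => ⟨?_, ?_, ?_, ?_⟩⟩
  · refine (real1_ultrapower_iff U φ _ _).2 ?_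
    filter_upwards [hlarge] with n hn using (hxy n t (ht.trans hn)).1
  · refine fun hmem => Ultrafilter.eventually_not.1 ?_ ((real1_ultrapower_iff U φ _ _).1 hmem)
    filter_upwards [hlarge] with n hn using (hxy n t (ht.trans hn)).2.1
  · refine (relMap_ultrapower_iff U lt _ _).2 ?_
    filter_upwards [hlarge] with n hn using (hxy n t (ht.trans hn)).2.2.1
  · intro t' ht' htt'
    refine (relMap_ultrapower_iff U lt _ _).2 ?_
    filter_upwards [hlarge] with n hn using
      (hxy n t (ht.trans hn)).2.2.2 t' (ht'.trans hn) htt'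

end Ultrapower

section Grid

variable {α : Type*} [LinearOrder α]

theorem alternates_of_boundary {m : ℕ} {G : Set (Fin (m + 1))} (E : Finset (Fin m))
    (hE : ∀ j ∈ E, j.castSucc ∈ G ∧ j.succ ∉ G) : Alternates (· < ·) G #E := by
  let e := E.orderEmbOfFin rfl
  have he : ∀ s, e s ∈ E := E.orderEmbOfFin_mem rfl
  refine ⟨fun t => if h : t < #E then (e ⟨t, h⟩).castSucc else 0,
    fun t => if h : t < #E then (e ⟨t, h⟩).succ else 0, fun t ht => ?_⟩
  simp only [dif_pos ht]
  refine ⟨(hE _ (he _)).1, (hE _ (he _)).2, Fin.castSucc_lt_succ, fun t' ht' htt' => ?_⟩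
  simp only [dif_pos ht']
  refine lt_of_le_of_ne (Fin.succ_le_castSucc_iff.2 (e.strictMono (Fin.mk_lt_mk.2 htt')))
    fun h => (hE _ (he ⟨t, ht⟩)).2 (h ▸ (hE _ (he ⟨t', ht'⟩)).1)

/-- Consecutive points of `W` are separated by some `X i`, so by pigeonhole one `X i`
separates more than `B` of the `#W - 1` consecutive pairs. -/
theorem exists_alternates_of_separating {ι : Type*} [Fintype ι] {W : Finset α} {X : ι → Set α}
    (hsep : ∀ u ∈ W, ∀ v ∈ W, u ≠ v → ∃ i, u ∈ X i ∧ v ∉ X i) {B : ℕ}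
    (hW : Fintype.card ι * B + 1 < #W) : ∃ i, Alternates (· < ·) (X i) (B + 1) := by
  classical
  obtain ⟨m, hm⟩ : ∃ m, #W = m + 1 := ⟨#W - 1, by omega⟩
  let e := W.orderEmbOfFin hm
  have hcut : ∀ j : Fin m, ∃ i, e j.castSucc ∈ X i ∧ e j.succ ∉ X i := fun j =>
    hsep _ (W.orderEmbOfFin_mem hm _) _ (W.orderEmbOfFin_mem hm _)
      (e.injective.ne Fin.castSucc_lt_succ.ne)
  choose f hf using hcut
  obtain ⟨i, hi⟩ := Fintype.exists_lt_card_fiber_of_mul_lt_card f (n := B)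
    (by simp only [Fintype.card_fin]; omega)
  refine ⟨i, ((alternates_of_boundary (G := e ⁻¹' X i) _ fun j hj => ?_).map
    e.strictMono).mono hi⟩
  obtain rfl := (Finset.mem_filter.1 hj).2
  exact hf j

end Grid

theorem IsICTPattern.exists_alternates {M : Type w} [L.Structure M] [LinearOrder M] {m : ℕ}
    {φ ψ : L.Formula (Fin 1 ⊕ Fin m)} {a b : ℕ → Fin m → M} (h : IsICTPattern φ ψ a b)
    (B : ℕ) :
    (∃ i, Alternates (· < ·) {x | Real1 φ x (a i)} (B + 1)) ∨
      ∃ j, Alternates (· < ·) {x | Real1 ψ x (b j)} (B + 1) := by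
  set R := 2 * B + 2 with hR
  choose w hφ hψ hφ' hψ' using fun p : Fin R × Fin R => h p.1 p.2 (Finset.range R)
  let X : Fin R ⊕ Fin R → Set M :=
    Sum.elim (fun i => {x | Real1 φ x (a i)}) (fun j => {x | Real1 ψ x (b j)})
  have hsep : ∀ p q : Fin R × Fin R, p ≠ q → ∃ s, w p ∈ X s ∧ w q ∉ X s := by
    intro p q hpq
    by_cases hrow : p.1 = q.1
    · exact ⟨.inr p.2, hψ p, hψ' q p.2 (Finset.mem_range.2 p.2.2)
        fun hcol => hpq (Prod.ext hrow (Fin.ext hcol))⟩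
    · exact ⟨.inl p.1, hφ p, hφ' q p.1 (Finset.mem_range.2 p.1.2) fun h => hrow (Fin.ext h)⟩
  have hw : Function.Injective w := fun p q hpq => by
    by_contra hne
    obtain ⟨s, hp, hq⟩ := hsep p q hne
    exact hq (hpq ▸ hp)
  have hsepW : ∀ u ∈ Finset.univ.image w, ∀ v ∈ Finset.univ.image w, u ≠ v →
      ∃ s, u ∈ X s ∧ v ∉ X s := by
    simp only [Finset.mem_image, Finset.mem_univ, true_and]
    rintro _ ⟨p, rfl⟩ _ ⟨q, rfl⟩ hpq
    exact hsep p q (hw.ne_iff.1 hpq)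
  have hcard : Fintype.card (Fin R ⊕ Fin R) * B + 1 < #(Finset.univ.image w) := by
    rw [Finset.card_image_of_injective _ hw]
    simp only [Fintype.card_sum, Fintype.card_prod, Fintype.card_fin, Finset.card_univ, hR]
    nlinarith
  obtain ⟨⟨i⟩ | ⟨j⟩, hs⟩ := exists_alternates_of_separating hsepW hcard
  · exact .inl ⟨i, hs⟩
  · exact .inr ⟨j, hs⟩

theorem dpMinimal_of_oMinimal_general {L : FirstOrder.Language.{u, v}}
    (lt : L.Relations 2) (T : L.Theory)
    (hlin : ∀ (M : Type w) [L.Structure M] [Nonempty M], M ⊨ T →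
      IsStrictTotalOrder M (fun x y : M => Structure.RelMap lt ![x, y]))
    (hom : ∀ (M : Type w) [L.Structure M] [Nonempty M], M ⊨ T →
      ∀ (m : ℕ) (φ : L.Formula (Fin 1 ⊕ Fin m)) (a : Fin m → M),
        ∃ (N : ℕ) (C : Fin N → Set M),
          (∀ i, (∃ p : M, C i = {p}) ∨
            IsOpenIntervalRel (fun x y : M => Structure.RelMap lt ![x, y]) (C i)) ∧
          {x : M | Real1 φ x a} = ⋃ i, C i) :
    IsDpMinimal.{u, v, w} T := by
  rintro M _ _ hM ⟨m, φ, ψ, a, b, hpat⟩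
  have horder (N : Type w) [L.Structure N] [Nonempty N] (hN : N ⊨ T) :
      IsStrictOrder N (fun x y : N => RelMap lt ![x, y]) :=
    (hlin N hN).toIsStrictOrder
  obtain ⟨A₁, hA₁⟩ := exists_alternation_bound lt horder hom hM φ a
  obtain ⟨A₂, hA₂⟩ := exists_alternation_bound lt horder hom hM ψ b
  have := hlin M hM
  let _ : LinearOrder M := by
    classical exact linearOrderOfSTO fun x y : M => RelMap lt ![x, y]
  rcases hpat.exists_alternates (A₁ + A₂) with ⟨i, hi⟩ | ⟨j, hj⟩
  · exact hA₁ i (hi.mono (by omega))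
  · exact hA₂ j (hj.mono (by omega))

/-- Every o-minimal complete theory is dp-minimal: if `<` is a dense (strict) linear order in
every model and every set definable with parameters in one free variable is a finite union of
singletons and open intervals, then no model admits an ICT pattern. -/
theorem dpMinimal_of_oMinimal {L : FirstOrder.Language.{u, v}}
    (lt : L.Relations 2) (T : L.Theory) (hT : T.IsComplete)
    (hlin : ∀ (M : Type w) [L.Structure M] [Nonempty M], M ⊨ T →
      IsStrictTotalOrder M (fun x y : M => Structure.RelMap lt ![x, y]))
    (hdense : ∀ (M : Type w) [L.Structure M] [Nonempty M], M ⊨ T →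
      ∀ a b : M, Structure.RelMap lt ![a, b] →
        ∃ c : M, Structure.RelMap lt ![a, c] ∧ Structure.RelMap lt ![c, b])
    (hom : ∀ (M : Type w) [L.Structure M] [Nonempty M], M ⊨ T →
      ∀ (m : ℕ) (φ : L.Formula (Fin 1 ⊕ Fin m)) (a : Fin m → M),
        ∃ (N : ℕ) (C : Fin N → Set M),
          (∀ i, (∃ p : M, C i = {p}) ∨
            IsOpenIntervalRel (fun x y : M => Structure.RelMap lt ![x, y]) (C i)) ∧
          {x : M | Real1 φ x a} = ⋃ i, C i) :
    IsDpMinimal.{u, v, w} T :=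
  dpMinimal_of_oMinimal_general lt T hlin hom

end DpMin
end
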